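/- Let m be a natural number, let p, q ≥ 1 be natural numbers, let D ≥ 0 be a real number, and let (b_i, d_i), i = 1,…,m, be pairs of real numbers with 0 ≤ b_i ≤ d_i ≤ D for every i. Suppose the degree-2p and degree-2q total persistences are bounded: ∑_{i=1}^m (d_i − b_i)^(2p) ≤ P and ∑_{i=1}^m (d_i − b_i)^(2q) ≤ Q for real numbers P, Q. Then the topological loss satisfies ∑_{i=1}^m (d_i − b_i)^p ((d_i + b_i)/2)^q ≤ P/2 + Q/4 + 2^(2q−2) · m · D^(2q). -/
import Mathlib


lemma term_bound (D x bi : ℝ) (p q : ℕ) (hq : 1 ≤ q) (hx : 0 ≤ x)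
    (hbi : 0 ≤ bi) (hbD : bi ≤ D) :
    x ^ p * ((x + 2 * bi) / 2) ^ q ≤
      x ^ (2 * p) / 2 + x ^ (2 * q) / 4 + 2 ^ (2 * q - 2) * D ^ (2 * q) := by
  have hy : (0:ℝ) ≤ (x + 2 * bi) / 2 := by positivity
  set y := (x + 2 * bi) / 2 with hy_def
  -- Step A: AM-GM
  have hA : x ^ p * y ^ q ≤ (x ^ (2 * p) + y ^ (2 * q)) / 2 := by
    have := two_mul_le_add_sq (x ^ p) (y ^ q)
    have h1 : (x ^ p) ^ 2 = x ^ (2 * p) := by ring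
    have h2 : (y ^ q) ^ 2 = y ^ (2 * q) := by ring
    nlinarith [this]
  -- Step B: y^(2q) ≤ x^(2q)/2 + 2^(2q-1) * D^(2q)
  have hyeq : y = x / 2 + bi := by rw [hy_def]; ring
  have hB0 : y ^ (2 * q) ≤ 2 ^ (2 * q - 1) * ((x / 2) ^ (2 * q) + bi ^ (2 * q)) := by
    rw [hyeq]; exact add_pow_le (by positivity) hbi _
  have hxd : (x / 2) ^ (2 * q) = x ^ (2 * q) / 2 ^ (2 * q) := by
    rw [div_pow]
  have e2 : (2:ℝ) ^ (2 * q) = 2 ^ (2 * q - 1) * 2 := by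
    rw [← pow_succ]; congr 1; omega
  have hpow : (2:ℝ) ^ (2 * q - 1) * (1 / 2 ^ (2 * q)) = 1 / 2 := by
    rw [e2]; field_simp
  have hbD' : bi ^ (2 * q) ≤ D ^ (2 * q) :=
    pow_le_pow_left₀ hbi hbD _
  have hB : y ^ (2 * q) ≤ x ^ (2 * q) / 2 + 2 ^ (2 * q - 1) * D ^ (2 * q) := by
    have h1 : (2:ℝ) ^ (2 * q - 1) * (x / 2) ^ (2 * q) = x ^ (2 * q) / 2 := by
      rw [hxd]
      calc (2:ℝ) ^ (2 * q - 1) * (x ^ (2 * q) / 2 ^ (2 * q))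
          = (2 ^ (2 * q - 1) * (1 / 2 ^ (2 * q))) * x ^ (2 * q) := by ring
        _ = x ^ (2 * q) / 2 := by rw [hpow]; ring
    have h2 : (2:ℝ) ^ (2 * q - 1) * bi ^ (2 * q) ≤ 2 ^ (2 * q - 1) * D ^ (2 * q) := by
      gcongr
    nlinarith [hB0]
  have h21 : (2:ℝ) ^ (2 * q - 1) = 2 * 2 ^ (2 * q - 2) := by
    rw [← pow_succ']
    congr 1
    omega
  rw [h21] at hB
  linarith [hA, hB]

/-- Boundedness of the topological loss: for pairs `0 ≤ b i ≤ d i ≤ D`,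
`i = 1,…,m`, naturals `p, q ≥ 1`, and bounds `∑ (d i − b i)^(2p) ≤ P`,
`∑ (d i − b i)^(2q) ≤ Q`, the topological loss satisfies
`∑ (d i − b i)^p ((d i + b i)/2)^q ≤ P/2 + Q/4 + 2^(2q−2) · m · D^(2q)`. -/
theorem topo_loss_bounded (m : ℕ) (p q : ℕ) (hp : 1 ≤ p) (hq : 1 ≤ q)
    (D : ℝ) (hD : 0 ≤ D) (b d : Fin m → ℝ)
    (hb : ∀ i, 0 ≤ b i) (hbd : ∀ i, b i ≤ d i) (hdD : ∀ i, d i ≤ D)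
    (P Q : ℝ)
    (hP : ∑ i, (d i - b i) ^ (2 * p) ≤ P)
    (hQ : ∑ i, (d i - b i) ^ (2 * q) ≤ Q) :
    ∑ i, (d i - b i) ^ p * ((d i + b i) / 2) ^ q ≤
      P / 2 + Q / 4 + 2 ^ (2 * q - 2) * m * D ^ (2 * q) := by
  have key : ∀ i : Fin m, (d i - b i) ^ p * ((d i + b i) / 2) ^ q ≤
      (d i - b i) ^ (2 * p) / 2 + (d i - b i) ^ (2 * q) / 4
        + 2 ^ (2 * q - 2) * D ^ (2 * q) := by
    intro i
    have h := term_bound D (d i - b i) (b i) p q hq (by linarith [hbd i])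
      (hb i) ((hbd i).trans (hdD i))
    have heq : d i - b i + 2 * b i = d i + b i := by ring
    rw [heq] at h
    exact h
  calc ∑ i, (d i - b i) ^ p * ((d i + b i) / 2) ^ q
      ≤ ∑ i, ((d i - b i) ^ (2 * p) / 2 + (d i - b i) ^ (2 * q) / 4
        + 2 ^ (2 * q - 2) * D ^ (2 * q)) :=
        Finset.sum_le_sum fun i _ => key i
    _ = (∑ i, (d i - b i) ^ (2 * p)) / 2 + (∑ i, (d i - b i) ^ (2 * q)) / 4
        + m * (2 ^ (2 * q - 2) * D ^ (2 * q)) := by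
        rw [Finset.sum_add_distrib, Finset.sum_add_distrib, Finset.sum_const,
          Finset.card_univ, Fintype.card_fin, ← Finset.sum_div, ← Finset.sum_div,
          nsmul_eq_mul]
    _ ≤ P / 2 + Q / 4 + 2 ^ (2 * q - 2) * m * D ^ (2 * q) := by
        have : (m:ℝ) * (2 ^ (2 * q - 2) * D ^ (2 * q)) =
          2 ^ (2 * q - 2) * m * D ^ (2 * q) := by ring
        rw [this]; gcongr <;> linarith
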